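/- Let p ∈ (0,1) and l ≥ 0. Then all eigenvalues of the matrix Δ^(l)_p are real and lie in the interval [0,2], Δ^(l)_p has exactly 3^l + 1 distinct eigenvalues (so all its eigenvalues are simple), and the spectra are nested: σ(Δ^(l)_p) ⊆ σ(Δ^(l+1)_p). -/

import Mathlib

open MeasureTheory Filter Matrix Polynomial

noncomputable section

/-- `resid x` is the residue mod 3 of `x` after dividing out the largest power of 3. -/
def resid (x : ℕ) : ℕ := (x / 3 ^ (x.factorization 3)) % 3

/-- The transition probabilities `p(x,y)` of the self-similar `p`-Laplacian:
`p(0,1) = 1`; for `x ≥ 1`, `(p(x,x−1), p(x,x+1)) = (1−p, p)` if `3^{−m(x)} x ≡ 1 (mod 3)`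
and `(p, 1−p)` if `3^{−m(x)} x ≡ 2 (mod 3)`; `p(x,y) = 0` if `|x−y| ≠ 1`. -/
def hop (p : ℝ) (x y : ℕ) : ℝ :=
  if y = x + 1 then (if x = 0 then 1 else if resid x = 1 then p else 1 - p)
  else if x = y + 1 then (if resid x = 1 then 1 - p else p)
  else 0

/-- The self-similar Laplacian `Δ_p` acting on sequences `f : ℤ₊ → ℂ`. -/
def lap (p : ℝ) (f : ℕ → ℂ) : ℕ → ℂ := fun x =>
  if x = 0 then f 0 - f 1
  else f x - (hop p x (x - 1) : ℂ) * f (x - 1) - (hop p x (x + 1) : ℂ) * f (x + 1)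

/-- The self-similar almost Mathieu operator `H_{p,β,α,θ}` acting on sequences. -/
def ham (p β α θ : ℝ) (f : ℕ → ℂ) : ℕ → ℂ := fun x =>
  if x = 0 then ((β * Real.cos θ : ℝ) : ℂ) * f 0 - f 1
  else ((β * Real.cos (2 * Real.pi * α * (x : ℝ) + θ) : ℝ) : ℂ) * f x
      - (hop p x (x - 1) : ℂ) * f (x - 1) - (hop p x (x + 1) : ℂ) * f (x + 1)

/-- The level-`l` Laplacian `Δ^(l)_p` as a `(3^l+1) × (3^l+1)` matrix (complex entries). -/
def lapMatrix (p : ℝ) (l : ℕ) : Matrix (Fin (3 ^ l + 1)) (Fin (3 ^ l + 1)) ℂ :=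
  Matrix.of fun i j =>
    if (i : ℕ) = 0 then (if (j : ℕ) = 0 then 1 else if (j : ℕ) = 1 then -1 else 0)
    else if (i : ℕ) = 3 ^ l then
      (if (j : ℕ) = 3 ^ l then 1 else if (j : ℕ) + 1 = 3 ^ l then -1 else 0)
    else if (j : ℕ) = (i : ℕ) then 1
    else if (j : ℕ) + 1 = (i : ℕ) then -(hop p i (i - 1) : ℂ)
    else if (j : ℕ) = (i : ℕ) + 1 then -(hop p i (i + 1) : ℂ)
    else 0

/-- The level-`l` almost Mathieu operator `H^(l)_{p,β,α,θ}` as a `(3^l+1) × (3^l+1)` matrix. -/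
def hamMatrix (p β α θ : ℝ) (l : ℕ) : Matrix (Fin (3 ^ l + 1)) (Fin (3 ^ l + 1)) ℂ :=
  Matrix.of fun i j =>
    if (i : ℕ) = 0 then
      (if (j : ℕ) = 0 then ((β * Real.cos θ : ℝ) : ℂ) else if (j : ℕ) = 1 then -1 else 0)
    else if (i : ℕ) = 3 ^ l then
      (if (j : ℕ) = 3 ^ l then ((β * Real.cos (2 * Real.pi * α * ((3 ^ l : ℕ) : ℝ) + θ) : ℝ) : ℂ)
       else if (j : ℕ) + 1 = 3 ^ l then -1 else 0)
    else if (j : ℕ) = (i : ℕ) then ((β * Real.cos (2 * Real.pi * α * ((i : ℕ) : ℝ) + θ) : ℝ) : ℂ)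
    else if (j : ℕ) + 1 = (i : ℕ) then -(hop p i (i - 1) : ℂ)
    else if (j : ℕ) = (i : ℕ) + 1 then -(hop p i (i + 1) : ℂ)
    else 0

/-- The set of eigenvalues (in ℂ) of a complex square matrix. -/
def matSpec {n : ℕ} (M : Matrix (Fin n) (Fin n) ℂ) : Set ℂ :=
  {z | ∃ v : Fin n → ℂ, v ≠ 0 ∧ M.mulVec v = z • v}

/-- The spectral decimation function `R_{Δ_p}(z) = z(z+p−2)(z−p−1)/(p(1−p))`. -/
def Rlap (p : ℝ) (z : ℂ) : ℂ := z * (z + (p : ℂ) - 2) * (z - (p : ℂ) - 1) / ((p : ℂ) * (1 - (p : ℂ)))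

/-- The spectral decimation function `R_{p,β,k/3,0}` of the level-1 self-similar AMO. -/
def Ramo (p β : ℝ) (z : ℂ) : ℂ :=
  (-(β : ℂ) + 2 * (p : ℂ) - 2 * z) *
    ((β : ℂ) ^ 2 + 2 * (β : ℂ) * (p : ℂ) + (β : ℂ) * z - 2 * (p : ℂ) * z - 2 * (p : ℂ)
      - 2 * z ^ 2 + 2) / (4 * (p : ℂ) * (1 - (p : ℂ)))

/-- Real version of `Ramo`. -/
def RamoR (p β z : ℝ) : ℝ :=
  (-β + 2 * p - 2 * z) * (β ^ 2 + 2 * β * p + β * z - 2 * p * z - 2 * p - 2 * z ^ 2 + 2) /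
    (4 * p * (1 - p))

/-- The function `φ(z) = 4p(p−1)/(4p² − (β+2z)²)`. -/
def phiFun (p β : ℝ) (z : ℂ) : ℂ :=
  4 * (p : ℂ) * ((p : ℂ) - 1) / (4 * (p : ℂ) ^ 2 - ((β : ℂ) + 2 * z) ^ 2)

/-- The function `ψ(z) = −(β² + 2βp + βz − 2pz − 2p − 2z² + 2)/(β + 2p + 2z)`. -/
def psiFun (p β : ℝ) (z : ℂ) : ℂ :=
  -((β : ℂ) ^ 2 + 2 * (β : ℂ) * (p : ℂ) + (β : ℂ) * z - 2 * (p : ℂ) * z - 2 * (p : ℂ)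
      - 2 * z ^ 2 + 2) / ((β : ℂ) + 2 * (p : ℂ) + 2 * z)

/-- The weighted measure on `ℕ` associated with a weight `w`, giving `{x}` mass `w x`. -/
def wMeasure (w : ℕ → ℝ) : Measure ℕ :=
  Measure.sum fun x => (ENNReal.ofReal (w x)) • Measure.dirac x

/-- Membership in the weighted `ℓ²`-space `ℓ²(ℤ₊, dπ)`. -/
def MemL2 (w : ℕ → ℝ) (f : ℕ → ℂ) : Prop := Summable fun x => ‖f x‖ ^ 2 * w x



-- ===== auxiliary development =====

lemma resid_of_not_dvd {x : ℕ} (h : ¬ 3 ∣ x) : resid x = x % 3 := by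
  unfold resid
  rw [Nat.factorization_eq_zero_of_not_dvd h]
  simp

lemma resid_one_or_two {x : ℕ} (hx : x ≠ 0) : resid x = 1 ∨ resid x = 2 := by
  have h3 : Nat.Prime 3 := by norm_num
  have hnd : ¬ (3 ∣ x / 3 ^ (x.factorization 3)) := Nat.not_dvd_ordCompl h3 hx
  have : resid x ≠ 0 := by
    unfold resid
    intro h
    exact hnd (Nat.dvd_of_mod_eq_zero h)
  have : resid x < 3 := Nat.mod_lt _ (by norm_num)
  omega

lemma resid_three_mul {x : ℕ} (hx : x ≠ 0) : resid (3 * x) = resid x := by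
  unfold resid
  have h3 : Nat.Prime 3 := by norm_num
  have hf : (3 * x).factorization 3 = x.factorization 3 + 1 := by
    rw [Nat.factorization_mul (by norm_num) hx]
    simp [h3.factorization_self]
    ring
  rw [hf, pow_succ]
  congr 1
  rw [mul_comm (3 ^ x.factorization 3) 3, ← Nat.div_div_eq_div_mul]
  congr 1
  exact Nat.mul_div_cancel_left x (by norm_num)

lemma resid_3add1 (u : ℕ) : resid (3 * u + 1) = 1 := by
  rw [resid_of_not_dvd (by omega)]; omega

lemma resid_3add2 (u : ℕ) : resid (3 * u + 2) = 2 := by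
  rw [resid_of_not_dvd (by omega)]; omega

lemma hop_right {p : ℝ} {x : ℕ} (hx : x ≠ 0) :
    hop p x (x + 1) = if resid x = 1 then p else 1 - p := by
  unfold hop; simp [hx]

lemma hop_left {p : ℝ} {x : ℕ} (hx : x ≠ 0) :
    hop p x (x - 1) = if resid x = 1 then 1 - p else p := by
  unfold hop
  rw [if_neg (by omega), if_pos (by omega)]

lemma hop_sum {p : ℝ} {x : ℕ} (hx : x ≠ 0) :
    hop p x (x - 1) + hop p x (x + 1) = 1 := by
  rw [hop_left hx, hop_right hx]
  by_cases h : resid x = 1 <;> simp [h]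

lemma hop_right_three {p : ℝ} {x : ℕ} (hx : x ≠ 0) :
    hop p (3 * x) (3 * x + 1) = hop p x (x + 1) := by
  rw [hop_right (by omega), hop_right hx, resid_three_mul hx]

lemma hop_left_three {p : ℝ} {x : ℕ} (hx : x ≠ 0) :
    hop p (3 * x) (3 * x - 1) = hop p x (x - 1) := by
  rw [hop_left (by omega), hop_left hx, resid_three_mul hx]

lemma hop_cell1_left (p : ℝ) (u : ℕ) : hop p (3 * u + 1) (3 * u) = 1 - p := by
  unfold hop
  rw [if_neg (by omega), if_pos (by omega), resid_3add1, if_pos rfl]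

lemma hop_cell1_right (p : ℝ) (u : ℕ) : hop p (3 * u + 1) (3 * u + 2) = p := by
  unfold hop
  rw [if_pos (by omega), if_neg (by omega), resid_3add1, if_pos rfl]

lemma hop_cell2_left (p : ℝ) (u : ℕ) : hop p (3 * u + 2) (3 * u + 1) = p := by
  unfold hop
  rw [if_neg (by omega), if_pos (by omega), resid_3add2]
  norm_num

lemma hop_cell2_right (p : ℝ) (u : ℕ) : hop p (3 * u + 2) (3 * u + 3) = 1 - p := by
  unfold hop
  rw [if_pos (by omega), if_neg (by omega), resid_3add2]
  norm_num

lemma lapMatrix_apply (p : ℝ) (l : ℕ) (i j : Fin (3^l+1)) : lapMatrix p l i j =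
    if (i : ℕ) = 0 then (if (j : ℕ) = 0 then 1 else if (j : ℕ) = 1 then -1 else 0)
    else if (i : ℕ) = 3 ^ l then
      (if (j : ℕ) = 3 ^ l then 1 else if (j : ℕ) + 1 = 3 ^ l then -1 else 0)
    else if (j : ℕ) = (i : ℕ) then 1
    else if (j : ℕ) + 1 = (i : ℕ) then -(hop p ((i:ℕ)) ((i:ℕ) - 1) : ℂ)
    else if (j : ℕ) = (i : ℕ) + 1 then -(hop p ((i:ℕ)) ((i:ℕ) + 1) : ℂ)
    else 0 := rfl

def spl (N : ℕ) : (Fin (N+1) ⊕ (Fin 2 × Fin N)) ≃ Fin (3*N+1) where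
  toFun := Sum.elim (fun k => ⟨3*(k:ℕ), by have := k.isLt; omega⟩)
    (fun su => ⟨3*(su.2:ℕ)+1+(su.1:ℕ), by have := su.1.isLt; have := su.2.isLt; omega⟩)
  invFun m := if h : (m:ℕ) % 3 = 0 then Sum.inl ⟨(m:ℕ)/3, by have := m.isLt; omega⟩
    else Sum.inr (⟨(m:ℕ)%3-1, by have := (m:ℕ).mod_lt (y := 3) (by omega); omega⟩,
      ⟨(m:ℕ)/3, by have := m.isLt; omega⟩)
  left_inv := by
    rintro (k | ⟨s, u⟩)
    · simp only [Sum.elim_inl]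
      erw [dif_pos (show 3 * (k:ℕ) % 3 = 0 by omega)]
      simp only [Sum.inl.injEq]
      exact Fin.ext (by simp; all_goals omega)
    · have hs := s.isLt
      simp only [Sum.elim_inr]
      erw [dif_neg (show ¬ (3 * (u:ℕ) + 1 + (s:ℕ)) % 3 = 0 by omega)]
      simp only [Sum.inr.injEq, Prod.mk.injEq]
      constructor
      · exact Fin.ext (by simp; all_goals omega)
      · exact Fin.ext (by simp; all_goals omega)
  right_inv := by
    intro m
    by_cases h : (m:ℕ) % 3 = 0
    · simp only [dif_pos h, Sum.elim_inl]
      exact Fin.ext (by simp; all_goals omega)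
    · have := (m:ℕ).mod_lt (y := 3) (by omega)
      simp only [dif_neg h, Sum.elim_inr]
      exact Fin.ext (by simp; all_goals omega)

def eqv (l : ℕ) : (Fin (3^l+1) ⊕ (Fin 2 × Fin (3^l))) ≃ Fin (3^(l+1)+1) :=
  (spl (3^l)).trans (finCongr (by rw [pow_succ]; ring))

lemma eqv_inl_val (l : ℕ) (k : Fin (3^l+1)) : ((eqv l (Sum.inl k)) : ℕ) = 3*(k:ℕ) := rfl

lemma eqv_inr_val (l : ℕ) (su : Fin 2 × Fin (3^l)) :
    ((eqv l (Sum.inr su)) : ℕ) = 3*(su.2:ℕ)+1+(su.1:ℕ) := rfl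

def avR (p : ℝ) (N x : ℕ) : ℝ := if x = N then 1 else hop p x (x-1)
def bvR (p : ℝ) (x : ℕ) : ℝ := if x = 0 then 1 else hop p x (x+1)

def BmM (p : ℝ) (N : ℕ) : Matrix (Fin (N+1)) (Fin 2 × Fin N) ℂ :=
  Matrix.of fun x su =>
    if (su.1:ℕ) = 1 ∧ (su.2:ℕ)+1 = (x:ℕ) then ((avR p N x : ℝ) : ℂ)
    else if (su.1:ℕ) = 0 ∧ (su.2:ℕ) = (x:ℕ) then ((bvR p x : ℝ) : ℂ) else 0

def CmM (p : ℝ) (N : ℕ) : Matrix (Fin 2 × Fin N) (Fin (N+1)) ℂ :=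
  Matrix.of fun su y =>
    if ((su.1:ℕ) = 0 ∧ (y:ℕ) = (su.2:ℕ)) ∨ ((su.1:ℕ) = 1 ∧ (y:ℕ) = (su.2:ℕ)+1)
    then ((1-p : ℝ) : ℂ) else 0

def cellM (p : ℝ) (z : ℂ) : Matrix (Fin 2) (Fin 2) ℂ := !![z-1, (p:ℂ); (p:ℂ), z-1]

lemma entryAA (p : ℝ) (z : ℂ) (l : ℕ) (x y : Fin (3^l+1)) :
    (z • (1 : Matrix (Fin (3^(l+1)+1)) (Fin (3^(l+1)+1)) ℂ) - lapMatrix p (l+1))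
      (eqv l (Sum.inl x)) (eqv l (Sum.inl y)) = ((z-1) • (1 : Matrix (Fin (3^l+1)) (Fin (3^l+1)) ℂ)) x y := by
  have hP : 3^(l+1) = 3*3^l := by rw [pow_succ]; ring
  have hx := x.isLt
  have hy := y.isLt
  rw [Matrix.sub_apply, Matrix.smul_apply, Matrix.smul_apply, Matrix.one_apply, Matrix.one_apply,
    lapMatrix_apply, eqv_inl_val, eqv_inl_val]
  simp only [Equiv.apply_eq_iff_eq, Sum.inl.injEq, Fin.ext_iff, smul_eq_mul]
  split_ifs <;> first | (exfalso; omega) | (simp; done) | ring1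

lemma entryAB (p : ℝ) (z : ℂ) (l : ℕ) (x : Fin (3^l+1)) (tv : Fin 2 × Fin (3^l)) :
    (z • (1 : Matrix (Fin (3^(l+1)+1)) (Fin (3^(l+1)+1)) ℂ) - lapMatrix p (l+1))
      (eqv l (Sum.inl x)) (eqv l (Sum.inr tv)) = BmM p (3^l) x tv := by
  obtain ⟨t, v⟩ := tv
  have hP : 3^(l+1) = 3*3^l := by rw [pow_succ]; ring
  have hx := x.isLt
  have hv := v.isLt
  have ht := t.isLt
  rw [Matrix.sub_apply, Matrix.smul_apply, Matrix.one_apply, lapMatrix_apply,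
    eqv_inl_val, eqv_inr_val, BmM, Matrix.of_apply]
  rw [if_neg (show ¬ (eqv l (Sum.inl x)) = (eqv l (Sum.inr (t,v))) by
    intro h; have := congrArg Fin.val h; rw [eqv_inl_val, eqv_inr_val] at this; omega)]
  simp only [avR, bvR]
  split_ifs <;>
    first
    | (exfalso; omega)
    | (exfalso; simp_all <;> omega)
    | (simp; done)
    | (simp only [smul_zero, mul_zero, mul_one, zero_sub, sub_zero, sub_neg_eq_add, zero_add, add_zero, neg_neg];
       norm_cast;
       first | exact hop_left_three (by omega) | exact hop_right_three (by omega))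

lemma entryBA (p : ℝ) (z : ℂ) (l : ℕ) (su : Fin 2 × Fin (3^l)) (y : Fin (3^l+1)) :
    (z • (1 : Matrix (Fin (3^(l+1)+1)) (Fin (3^(l+1)+1)) ℂ) - lapMatrix p (l+1))
      (eqv l (Sum.inr su)) (eqv l (Sum.inl y)) = CmM p (3^l) su y := by
  obtain ⟨s, u⟩ := su
  have hP : 3^(l+1) = 3*3^l := by rw [pow_succ]; ring
  have hy := y.isLt
  have hu := u.isLt
  rw [Matrix.sub_apply, Matrix.smul_apply, Matrix.one_apply, lapMatrix_apply,
    eqv_inr_val, eqv_inl_val, CmM, Matrix.of_apply]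
  rw [if_neg (show ¬ (eqv l (Sum.inr (s,u))) = (eqv l (Sum.inl y)) by
    intro h; have := congrArg Fin.val h; rw [eqv_inr_val, eqv_inl_val] at this; have hs := s.isLt; omega)]
  fin_cases s <;>
    simp only [Fin.isValue, Fin.val_zero, Fin.val_one, add_zero] <;>
    split_ifs <;>
    first
    | (exfalso; omega)
    | (exfalso; simp_all <;> omega)
    | (simp; done)
    | (simp only [smul_zero, mul_zero, mul_one, zero_sub, sub_zero, sub_neg_eq_add, zero_add, add_zero, neg_neg];
       norm_cast;
       simp only [show 3*(u:ℕ)+1+1 = 3*(u:ℕ)+2 from by omega,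
         show 3*(u:ℕ)+2-1 = 3*(u:ℕ)+1 from by omega,
         show 3*(u:ℕ)+1-1 = 3*(u:ℕ) from by omega,
         show 3*(u:ℕ)+2+1 = 3*(u:ℕ)+3 from by omega];
       first | exact hop_cell1_left p u | exact hop_cell1_right p u | exact hop_cell2_left p u | exact hop_cell2_right p u)

set_option maxHeartbeats 2000000 in
lemma entryBB (p : ℝ) (z : ℂ) (l : ℕ) (su tv : Fin 2 × Fin (3^l)) :
    (z • (1 : Matrix (Fin (3^(l+1)+1)) (Fin (3^(l+1)+1)) ℂ) - lapMatrix p (l+1))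
      (eqv l (Sum.inr su)) (eqv l (Sum.inr tv)) =
      (Matrix.blockDiagonal (fun _ : Fin (3^l) => cellM p z)) su tv := by
  obtain ⟨s, u⟩ := su
  obtain ⟨t, v⟩ := tv
  have hP : 3^(l+1) = 3*3^l := by rw [pow_succ]; ring
  have hu := u.isLt
  have hv := v.isLt
  rw [Matrix.sub_apply, Matrix.smul_apply, Matrix.one_apply, lapMatrix_apply,
    eqv_inr_val, eqv_inr_val, Matrix.blockDiagonal_apply]
  simp only [Equiv.apply_eq_iff_eq, Sum.inr.injEq, Prod.mk.injEq, Fin.ext_iff, smul_eq_mul]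
  fin_cases s <;> fin_cases t <;>
    simp only [Fin.isValue, Fin.val_zero, Fin.val_one, add_zero, cellM, Fin.mk_zero, Fin.mk_one,
      Fin.zero_eta, Fin.mk_one, Matrix.of_apply, Matrix.cons_val', Matrix.cons_val_zero, Matrix.cons_val_one,
      Matrix.head_cons, Matrix.empty_val', Matrix.cons_val_fin_one, Matrix.head_fin_const] <;>
    split_ifs <;>
    first
    | (exfalso; omega)
    | (exfalso; simp_all <;> omega)
    | (simp; done)
    | ring1
    | (simp only [smul_zero, mul_zero, mul_one, zero_sub, sub_zero, sub_neg_eq_add, zero_add, add_zero, neg_neg];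
       norm_cast;
       simp only [show 3*(u:ℕ)+1+1 = 3*(u:ℕ)+2 from by omega,
         show 3*(u:ℕ)+2-1 = 3*(u:ℕ)+1 from by omega,
         show 3*(u:ℕ)+1-1 = 3*(u:ℕ) from by omega,
         show 3*(u:ℕ)+2+1 = 3*(u:ℕ)+3 from by omega];
       first | exact hop_cell1_left p u | exact hop_cell1_right p u | exact hop_cell2_left p u | exact hop_cell2_right p u)
def cellI (p : ℝ) (z : ℂ) : Matrix (Fin 2) (Fin 2) ℂ :=
  Matrix.of fun s t => (if s = t then z-1 else -(p:ℂ)) * ((z-1)^2 - (p:ℂ)^2)⁻¹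

lemma cell_mul (p : ℝ) (z : ℂ) (hΔ : (z-1)^2 - (p:ℂ)^2 ≠ 0) :
    cellM p z * cellI p z = 1 := by
  ext s t
  fin_cases s <;> fin_cases t <;>
    simp [cellM, cellI, Matrix.mul_apply, Fin.sum_univ_two, Matrix.one_apply] <;>
    field_simp <;> ring

lemma mul_blockDiagonal_apply {α : Type*} [Fintype α] {N : ℕ}
    (B : Matrix α (Fin 2 × Fin N) ℂ) (f : Fin N → Matrix (Fin 2) (Fin 2) ℂ)
    (x : α) (t : Fin 2) (v : Fin N) :
    (B * Matrix.blockDiagonal f) x (t,v) = ∑ s : Fin 2, B x (s,v) * f v s t := by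
  rw [Matrix.mul_apply, Fintype.sum_prod_type]
  refine Finset.sum_congr rfl fun s _ => ?_
  simp only [Matrix.blockDiagonal_apply, mul_ite, mul_zero]
  rw [Finset.sum_ite_eq' Finset.univ v]
  simp

lemma collapse₀ {N : ℕ} (g : Fin N → ℂ) (y : ℕ) {d : (v : Fin N) → Decidable (y = (v:ℕ))} :
    (∑ v : Fin N, (@ite _ (y = (v:ℕ)) (d v) (g v) 0)) = if h : y < N then g ⟨y,h⟩ else 0 := by
  have hcan : ∀ v : Fin N, (@ite ℂ (y = (v:ℕ)) (d v) (g v) 0) = (if y = (v:ℕ) then g v else 0) :=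
    fun v => by rcases Subsingleton.elim (d v) (instDecidableEqNat y (v:ℕ)) with h; rfl
  rw [Finset.sum_congr rfl (fun v _ => hcan v)]
  by_cases h : y < N
  · rw [dif_pos h, Finset.sum_eq_single (⟨y,h⟩ : Fin N)]
    · simp
    · intro b _ hb
      rw [if_neg]
      intro hyb
      exact hb (Fin.ext hyb.symm)
    · simp
  · rw [dif_neg h, Finset.sum_eq_zero]
    intro v _
    rw [if_neg]
    have := v.isLt
    omega

lemma collapse₁ {N : ℕ} (g : Fin N → ℂ) (y : ℕ) {d : (v : Fin N) → Decidable (y = (v:ℕ)+1)} :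
    (∑ v : Fin N, (@ite _ (y = (v:ℕ)+1) (d v) (g v) 0)) =
      if h : 1 ≤ y ∧ y-1 < N then g ⟨y-1,h.2⟩ else 0 := by
  have hcan : ∀ v : Fin N, (@ite ℂ (y = (v:ℕ)+1) (d v) (g v) 0) = (if y = (v:ℕ)+1 then g v else 0) :=
    fun v => by rcases Subsingleton.elim (d v) (instDecidableEqNat y ((v:ℕ)+1)) with h; rfl
  rw [Finset.sum_congr rfl (fun v _ => hcan v)]
  by_cases h : 1 ≤ y ∧ y-1 < N
  · rw [dif_pos h, Finset.sum_eq_single (⟨y-1,h.2⟩ : Fin N)]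
    · rw [if_pos (by simp; omega)]
    · intro b _ hb
      rw [if_neg]
      intro hyb
      refine hb (Fin.ext ?_)
      simp
      omega
    · simp
  · rw [dif_neg h, Finset.sum_eq_zero]
    intro v _
    rw [if_neg]
    have := v.isLt
    omega
lemma nat00 : ((0:ℕ) = 0) = True := by simp
lemma nat01 : ((0:ℕ) = 1) = False := by simp
lemma nat10 : ((1:ℕ) = 0) = False := by simp
lemma nat11 : ((1:ℕ) = 1) = True := by simp

set_option maxHeartbeats 3000000 in
lemma schur_eq (p : ℝ) (z : ℂ) (l : ℕ) (hc : (p:ℂ) * (1 - (p:ℂ)) ≠ 0)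
    (hΔ : (z-1)^2 - (p:ℂ)^2 ≠ 0) :
    ((z-1) • (1 : Matrix (Fin (3^l+1)) (Fin (3^l+1)) ℂ)) -
      BmM p (3^l) * Matrix.blockDiagonal (fun _ : Fin (3^l) => cellI p z) * CmM p (3^l) =
    (((p:ℂ) * (1-(p:ℂ))) / ((z-1)^2 - (p:ℂ)^2)) •
      ((Rlap p z) • (1 : Matrix (Fin (3^l+1)) (Fin (3^l+1)) ℂ) - lapMatrix p l) := by
  have hN1 : 1 ≤ 3^l := Nat.one_le_pow _ _ (by norm_num)
  ext x y
  have hx := x.isLt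
  have hy := y.isLt
  rw [Matrix.sub_apply, Matrix.mul_apply, Fintype.sum_prod_type]
  simp only [mul_blockDiagonal_apply, Fin.sum_univ_two]
  simp only [BmM, CmM, cellI, lapMatrix_apply, Rlap, Matrix.smul_apply, Matrix.sub_apply,
    Matrix.one_apply, Matrix.of_apply, Matrix.cons_val', Matrix.cons_val_zero,
    Matrix.cons_val_one, Matrix.head_cons, Matrix.empty_val', Matrix.cons_val_fin_one,
    Matrix.head_fin_const, Fin.isValue, Fin.val_zero, Fin.val_one, Fin.ext_iff,
    nat00, nat01, nat10, nat11, false_and, true_and, and_true, and_false, or_false, false_or, if_true, if_false, Complex.ofReal_one,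
    mul_ite, mul_zero, ite_mul, zero_mul, add_zero, zero_add, smul_eq_mul, avR, bvR,
    collapse₀, collapse₁, Fin.val_mk]
  split_ifs <;>
    first
    | (exfalso; omega)
    | (push_cast; field_simp [hΔ, hc, left_ne_zero_of_mul hc, right_ne_zero_of_mul hc]; all_goals ring1)
    | (rw [show (hop p (↑x) ((x:ℕ)+1) : ℝ) = 1 - hop p (↑x) ((x:ℕ)-1) from by
          have := hop_sum (p := p) (x := (x:ℕ)) (by omega); linarith];
       push_cast; field_simp [hΔ, hc, left_ne_zero_of_mul hc, right_ne_zero_of_mul hc]; all_goals ring1)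
lemma blocks_det (p : ℝ) (z : ℂ) (l : ℕ) (hc : (p:ℂ) * (1 - (p:ℂ)) ≠ 0)
    (hΔ : (z-1)^2 - (p:ℂ)^2 ≠ 0) :
    ((z-1)^2 - (p:ℂ)^2) * (z • (1 : Matrix (Fin (3^(l+1)+1)) (Fin (3^(l+1)+1)) ℂ) - lapMatrix p (l+1)).det
    = ((p:ℂ)*(1-(p:ℂ)))^(3^l+1) *
      ((Rlap p z) • (1 : Matrix (Fin (3^l+1)) (Fin (3^l+1)) ℂ) - lapMatrix p l).det := by
  have hright : (Matrix.blockDiagonal fun _ : Fin (3^l) => cellM p z) *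
      (Matrix.blockDiagonal fun _ : Fin (3^l) => cellI p z) = 1 := by
    rw [← Matrix.blockDiagonal_mul]
    have : (fun k : Fin (3^l) => cellM p z * cellI p z) = fun _ => 1 := by
      funext k
      exact cell_mul p z hΔ
    rw [this]; exact Matrix.blockDiagonal_one
  haveI : Invertible (Matrix.blockDiagonal fun _ : Fin (3^l) => cellM p z) :=
    invertibleOfRightInverse _ _ hright
  have hsub : (z • (1 : Matrix (Fin (3^(l+1)+1)) (Fin (3^(l+1)+1)) ℂ) - lapMatrix p (l+1)).det =
      (Matrix.fromBlocks ((z-1) • 1) (BmM p (3^l)) (CmM p (3^l))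
        (Matrix.blockDiagonal fun _ : Fin (3^l) => cellM p z)).det := by
    rw [← Matrix.det_submatrix_equiv_self (eqv l)]
    congr 1
    ext i j
    rcases i with x | su <;> rcases j with y | tv
    · simpa using entryAA p z l x y
    · simpa using entryAB p z l x tv
    · simpa using entryBA p z l su y
    · simpa using entryBB p z l su tv
  rw [hsub, Matrix.det_fromBlocks₂₂, invOf_eq_right_inv hright, schur_eq p z l hc hΔ,
    Matrix.det_smul, Matrix.det_blockDiagonal]
  have hcell : (cellM p z).det = ((z-1)^2 - (p:ℂ)^2) := by
    simp [cellM, Matrix.det_fin_two_of]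
    ring
  rw [hcell, Finset.prod_const, Finset.card_univ, Fintype.card_fin, Fintype.card_fin]
  have hpow : (((p:ℂ)*(1-(p:ℂ))) / ((z-1)^2 - (p:ℂ)^2))^(3^l+1) * ((z-1)^2 - (p:ℂ)^2)^(3^l+1)
      = ((p:ℂ)*(1-(p:ℂ)))^(3^l+1) := by rw [← mul_pow, div_mul_cancel₀ _ hΔ]
  linear_combination ((Rlap p z) • (1 : Matrix (Fin (3^l+1)) (Fin (3^l+1)) ℂ) - lapMatrix p l).det * hpow

lemma eval_charpoly {n : ℕ} (M : Matrix (Fin n) (Fin n) ℂ) (z : ℂ) :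
    M.charpoly.eval z = (z • (1 : Matrix (Fin n) (Fin n) ℂ) - M).det := by
  rw [Matrix.charpoly, _root_.eval_det, Matrix.matPolyEquiv_charmatrix]
  congr 1
  rw [Polynomial.eval_sub, Polynomial.eval_X, Polynomial.eval_C]
  congr 1
  rw [Matrix.scalar_apply, Matrix.smul_one_eq_diagonal]

open Polynomial in
def PC (p : ℝ) : Polynomial ℂ := X * (X + C (p:ℂ) - 2) * (X - C (p:ℂ) - 1)

def Preal (p x : ℝ) : ℝ := x * (x + p - 2) * (x - p - 1)

lemma PC_eval (p t : ℝ) : (PC p).eval (t:ℂ) = ((Preal p t : ℝ) : ℂ) := by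
  simp [PC, Preal]
  all_goals (push_cast; ring)

lemma Preal_cont (p : ℝ) : Continuous (fun x => Preal p x) := by
  unfold Preal
  fun_prop

lemma Preal_zero (p : ℝ) : Preal p 0 = 0 := by unfold Preal; ring
lemma Preal_one_sub (p : ℝ) : Preal p (1-p) = 2*(p*(1-p)) := by unfold Preal; ring
lemma Preal_one_add (p : ℝ) : Preal p (1+p) = 0 := by unfold Preal; ring
lemma Preal_two (p : ℝ) : Preal p 2 = 2*(p*(1-p)) := by unfold Preal; ring

lemma cubic_roots_mid {p : ℝ} (hp : 0 < p ∧ p < 1) {r : ℝ} (hr : 0 < r ∧ r < 2) :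
    ∃ t : ℝ × ℝ × ℝ, (0 < t.1 ∧ t.1 < 1-p) ∧ (1-p < t.2.1 ∧ t.2.1 < 1+p) ∧
      (1+p < t.2.2 ∧ t.2.2 < 2) ∧ Preal p t.1 = p*(1-p)*r ∧
      Preal p t.2.1 = p*(1-p)*r ∧ Preal p t.2.2 = p*(1-p)*r := by
  have hc : 0 < p*(1-p) := mul_pos hp.1 (by linarith)
  have hmem : p*(1-p)*r ∈ Set.Ioo (0 : ℝ) (2*(p*(1-p))) := by
    constructor
    · exact mul_pos hc hr.1
    · nlinarith
  have h1 : p*(1-p)*r ∈ Set.Ioo (Preal p 0) (Preal p (1-p)) := by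
    rw [Preal_zero, Preal_one_sub]; exact hmem
  have h2 : p*(1-p)*r ∈ Set.Ioo (Preal p (1+p)) (Preal p (1-p)) := by
    rw [Preal_one_add, Preal_one_sub]; exact hmem
  have h3 : p*(1-p)*r ∈ Set.Ioo (Preal p (1+p)) (Preal p 2) := by
    rw [Preal_one_add, Preal_two]; exact hmem
  obtain ⟨a, ha, hae⟩ := intermediate_value_Ioo (by linarith : (0:ℝ) ≤ 1-p)
    (Preal_cont p).continuousOn h1
  obtain ⟨b, hb, hbe⟩ := intermediate_value_Ioo' (by linarith : (1-p:ℝ) ≤ 1+p)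
    (Preal_cont p).continuousOn h2
  obtain ⟨g, hg, hge⟩ := intermediate_value_Ioo (by linarith : (1+p:ℝ) ≤ 2)
    (Preal_cont p).continuousOn h3
  exact ⟨(a, b, g), ⟨ha.1, ha.2⟩, ⟨hb.1, hb.2⟩, ⟨hg.1, hg.2⟩, hae, hbe, hge⟩

open Polynomial in
lemma cubic_factor {p : ℝ} (w a b g : ℂ) (hab : a ≠ b) (hag : a ≠ g) (hbg : b ≠ g)
    (ha : (PC p).eval a = w) (hb : (PC p).eval b = w) (hg : (PC p).eval g = w) :
    PC p - C w = (X - C a) * (X - C b) * (X - C g) := by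
  have hqex : PC p - C w = X^3 - 3*X^2 + (C (p:ℂ) - C (p:ℂ)^2 + 2) * X - C w := by
    unfold PC; ring
  have hmon : (PC p - C w).Monic := by rw [hqex]; monicity!
  have hdeg : (PC p - C w).natDegree = 3 := by rw [hqex]; compute_degree!
  have hsplit : Splits (PC p - C w) := IsAlgClosed.splits _
  have hcard : Multiset.card (PC p - C w).roots = 3 := by
    have := hsplit.natDegree_eq_card_roots
    omega
  have hroot : ∀ x, (PC p).eval x = w → x ∈ (PC p - C w).roots := by
    intro x hx
    rw [Polynomial.mem_roots hmon.ne_zero]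
    simp [IsRoot, hx]
  have hle : ({a, b, g} : Multiset ℂ) ≤ (PC p - C w).roots := by
    rw [Multiset.le_iff_count]
    intro x
    by_cases hxa : x = a
    · subst hxa
      have : Multiset.count x ({x, b, g} : Multiset ℂ) = 1 := by
        simp [Multiset.count_cons, Multiset.count_singleton, hab, hag]
      rw [this]
      exact Multiset.one_le_count_iff_mem.2 (hroot x ha)
    · by_cases hxb : x = b
      · subst hxb
        have : Multiset.count x ({a, x, g} : Multiset ℂ) = 1 := by
          simp [Multiset.count_cons, Multiset.count_singleton, hxa, hbg]
        rw [this]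
        exact Multiset.one_le_count_iff_mem.2 (hroot x hb)
      · by_cases hxg : x = g
        · subst hxg
          have : Multiset.count x ({a, b, x} : Multiset ℂ) = 1 := by
            simp [Multiset.count_cons, Multiset.count_singleton, hxa, hxb]
          rw [this]
          exact Multiset.one_le_count_iff_mem.2 (hroot x hg)
        · have : Multiset.count x ({a, b, g} : Multiset ℂ) = 0 := by
            simp [Multiset.count_cons, Multiset.count_singleton, hxa, hxb, hxg]
          rw [this]
          omega
  have heq : (PC p - C w).roots = ({a, b, g} : Multiset ℂ) := by
    apply (Multiset.eq_of_le_of_card_le hle ?_).symm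
    rw [hcard]
    simp
  have hprod := hsplit.eq_prod_roots_of_monic hmon
  rw [heq] at hprod
  rw [hprod]
  simp
  all_goals ring
open Polynomial

noncomputable def trip (p r : ℝ) : Multiset ℝ :=
  if h : (0 < p ∧ p < 1) ∧ (0 < r ∧ r < 2) then
    {(Classical.choose (cubic_roots_mid h.1 h.2)).1,
     (Classical.choose (cubic_roots_mid h.1 h.2)).2.1,
     (Classical.choose (cubic_roots_mid h.1 h.2)).2.2}
  else if r = 0 then {0, 2-p, 1+p} else {2, p, 1-p}

lemma trip_card (p r : ℝ) : Multiset.card (trip p r) = 3 := by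
  unfold trip
  split_ifs <;> simp

lemma trip_mid_spec {p r : ℝ} (hp : 0 < p ∧ p < 1) (hr : 0 < r ∧ r < 2) :
    ∃ a b g : ℝ, trip p r = {a,b,g} ∧ (0 < a ∧ a < 1-p) ∧ (1-p < b ∧ b < 1+p) ∧
      (1+p < g ∧ g < 2) ∧ Preal p a = p*(1-p)*r ∧ Preal p b = p*(1-p)*r ∧
      Preal p g = p*(1-p)*r := by
  have h : (0 < p ∧ p < 1) ∧ (0 < r ∧ r < 2) := ⟨hp, hr⟩
  obtain ⟨hA, hB, hG, ea, eb, eg⟩ := Classical.choose_spec (cubic_roots_mid h.1 h.2)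
  exact ⟨_, _, _, by unfold trip; rw [dif_pos h], hA, hB, hG, ea, eb, eg⟩

lemma trip_zero (p : ℝ) : trip p 0 = {0, 2-p, 1+p} := by
  unfold trip
  rw [dif_neg, if_pos rfl]
  rintro ⟨-, h, -⟩
  exact lt_irrefl 0 h

lemma trip_two (p : ℝ) : trip p 2 = {2, p, 1-p} := by
  unfold trip
  rw [dif_neg, if_neg (by norm_num)]
  rintro ⟨-, -, h⟩
  exact lt_irrefl 2 h

lemma Preal_two_sub (p : ℝ) : Preal p (2-p) = 0 := by unfold Preal; ring
lemma Preal_p (p : ℝ) : Preal p p = 2*(p*(1-p)) := by unfold Preal; ring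

lemma trip_mem {p r : ℝ} (hp : 0 < p ∧ p < 1) (hr : r ∈ Set.Icc (0:ℝ) 2) {t : ℝ}
    (ht : t ∈ trip p r) : (0 ≤ t ∧ t ≤ 2) ∧ Preal p t = p*(1-p)*r := by
  by_cases hmid : 0 < r ∧ r < 2
  · obtain ⟨a, b, g, htr, hA, hB, hG, ea, eb, eg⟩ := trip_mid_spec hp hmid
    rw [htr] at ht
    simp only [Multiset.insert_eq_cons, Multiset.mem_cons, Multiset.mem_singleton] at ht
    rcases ht with h | h | h <;> subst h
    · exact ⟨⟨le_of_lt hA.1, by linarith [hp.2]⟩, ea⟩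
    · exact ⟨⟨by linarith [hp.2], by linarith [hp.1]⟩, eb⟩
    · exact ⟨⟨by linarith [hp.1], le_of_lt hG.2⟩, eg⟩
  · rcases hr with ⟨hr0, hr2⟩
    by_cases h0 : r = 0
    · subst h0
      rw [trip_zero] at ht
      simp only [Multiset.insert_eq_cons, Multiset.mem_cons, Multiset.mem_singleton] at ht
      rcases ht with h | h | h <;> subst h
      · exact ⟨⟨le_refl 0, by norm_num⟩, by rw [Preal_zero]; ring⟩
      · exact ⟨⟨by linarith [hp.2], by linarith [hp.1]⟩, by rw [Preal_two_sub]; ring⟩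
      · exact ⟨⟨by linarith [hp.1], by linarith [hp.2]⟩, by rw [Preal_one_add]; ring⟩
    · have h2 : r = 2 := by
        rcases lt_or_eq_of_le hr2 with h | h
        · exact absurd ⟨lt_of_le_of_ne hr0 (Ne.symm h0), h⟩ hmid
        · exact h
      subst h2
      rw [trip_two] at ht
      simp only [Multiset.insert_eq_cons, Multiset.mem_cons, Multiset.mem_singleton] at ht
      rcases ht with h | h | h <;> subst h
      · exact ⟨⟨by norm_num, le_refl 2⟩, by rw [Preal_two]; ring⟩
      · exact ⟨⟨le_of_lt hp.1, by linarith [hp.2]⟩, by rw [Preal_p]; ring⟩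
      · exact ⟨⟨by linarith [hp.2], by linarith [hp.1]⟩, by rw [Preal_one_sub]; ring⟩

lemma trip_mid_props {p r : ℝ} (hp : 0 < p ∧ p < 1) (hr : 0 < r ∧ r < 2) :
    (trip p r).Nodup ∧ (1-p) ∉ trip p r ∧ (1+p) ∉ trip p r := by
  obtain ⟨a, b, g, htr, hA, hB, hG, -, -, -⟩ := trip_mid_spec hp hr
  rw [htr]
  refine ⟨?_, ?_, ?_⟩
  · simp only [Multiset.insert_eq_cons, Multiset.nodup_cons, Multiset.mem_cons,
      Multiset.mem_singleton, Multiset.nodup_singleton, and_true]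
    push_neg
    refine ⟨⟨by linarith, by linarith⟩, by linarith⟩
  · simp only [Multiset.insert_eq_cons, Multiset.mem_cons, Multiset.mem_singleton]
    push_neg
    refine ⟨by linarith, by linarith, by linarith⟩
  · simp only [Multiset.insert_eq_cons, Multiset.mem_cons, Multiset.mem_singleton]
    push_neg
    refine ⟨by linarith, by linarith, by linarith⟩

lemma trip_factor {p r : ℝ} (hp : 0 < p ∧ p < 1) (hr : r ∈ Set.Icc (0:ℝ) 2) :
    PC p - C ((p*(1-p)*r : ℝ) : ℂ) =
      ((trip p r).map (fun t : ℝ => X - C (t:ℂ))).prod := by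
  by_cases hmid : 0 < r ∧ r < 2
  · obtain ⟨a, b, g, htr, hA, hB, hG, ea, eb, eg⟩ := trip_mid_spec hp hmid
    rw [htr]
    have hab : (a:ℂ) ≠ (b:ℂ) := by exact_mod_cast ne_of_lt (show a < b by linarith)
    have hag : (a:ℂ) ≠ (g:ℂ) := by exact_mod_cast ne_of_lt (show a < g by linarith)
    have hbg : (b:ℂ) ≠ (g:ℂ) := by exact_mod_cast ne_of_lt (show b < g by linarith)
    have hfa : (PC p).eval (a:ℂ) = ((p*(1-p)*r : ℝ) : ℂ) := by rw [PC_eval, ea]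
    have hfb : (PC p).eval (b:ℂ) = ((p*(1-p)*r : ℝ) : ℂ) := by rw [PC_eval, eb]
    have hfg : (PC p).eval (g:ℂ) = ((p*(1-p)*r : ℝ) : ℂ) := by rw [PC_eval, eg]
    rw [cubic_factor _ _ _ _ hab hag hbg hfa hfb hfg]
    simp
    all_goals ring
  · rcases hr with ⟨hr0, hr2⟩
    by_cases h0 : r = 0
    · subst h0
      rw [trip_zero]
      simp only [Multiset.insert_eq_cons, Multiset.map_cons, Multiset.map_singleton,
        Multiset.prod_cons, Multiset.prod_singleton]
      unfold PC
      push_cast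
      simp only [_root_.map_sub, _root_.map_add, _root_.map_mul, _root_.map_pow, _root_.map_one, _root_.map_zero, map_ofNat]
      ring
    · have h2 : r = 2 := by
        rcases lt_or_eq_of_le hr2 with h | h
        · exact absurd ⟨lt_of_le_of_ne hr0 (Ne.symm h0), h⟩ hmid
        · exact h
      subst h2
      rw [trip_two]
      simp only [Multiset.insert_eq_cons, Multiset.map_cons, Multiset.map_singleton,
        Multiset.prod_cons, Multiset.prod_singleton]
      unfold PC
      push_cast
      simp only [_root_.map_sub, _root_.map_add, _root_.map_mul, _root_.map_pow, _root_.map_one, _root_.map_zero, map_ofNat]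
      ring

def GoodF (p : ℝ) (l : ℕ) (F : Finset ℝ) : Prop :=
  F.card = 3^l + 1 ∧ (↑F ⊆ Set.Icc (0:ℝ) 2) ∧ (0:ℝ) ∈ F ∧ (2:ℝ) ∈ F ∧
  (p ≠ 1/2 → (1-p) ∉ F ∧ (1+p) ∉ F) ∧
  (∀ t ∈ F, ∃ r ∈ F, Preal p t = p*(1-p)*r) ∧
  (lapMatrix p l).charpoly = (F.val.map (fun r : ℝ => X - C (r:ℂ))).prod

lemma good_zero {p : ℝ} (hp : 0 < p ∧ p < 1) : GoodF p 0 ({0, 2} : Finset ℝ) := by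
  refine ⟨by norm_num, ?_, by norm_num, by norm_num, ?_, ?_, ?_⟩
  · intro x hx
    simp only [Finset.coe_insert, Finset.coe_singleton, Set.mem_insert_iff,
      Set.mem_singleton_iff] at hx
    rcases hx with h | h <;> subst h <;> constructor <;> norm_num
  · intro hne
    constructor <;> simp only [Finset.mem_insert, Finset.mem_singleton] <;> push_neg <;>
      constructor <;> intro h <;> linarith [hp.1, hp.2]
  · intro t ht
    simp only [Finset.mem_insert, Finset.mem_singleton] at ht
    rcases ht with h | h <;> subst h
    · exact ⟨0, by norm_num, by rw [Preal_zero]; ring⟩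
    · exact ⟨2, by norm_num, by rw [Preal_two]; ring⟩
  · have hval : ({0, 2} : Finset ℝ).val = (0 ::ₘ {2} : Multiset ℝ) := by
      rw [Finset.insert_val_of_notMem (by norm_num)]
      rfl
    rw [hval]
    simp only [Multiset.insert_eq_cons, Multiset.map_cons, Multiset.map_singleton,
      Multiset.prod_cons, Multiset.prod_singleton]
    apply Polynomial.eq_of_infinite_eval_eq
    have : {z : ℂ | eval z (lapMatrix p 0).charpoly = eval z ((X - C ((0:ℝ):ℂ)) * (X - C ((2:ℝ):ℂ)))} = Set.univ := by
      apply Set.eq_univ_of_forall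
      intro z
      simp only [Set.mem_setOf_eq]
      rw [_root_.eval_charpoly, eval_mul, eval_sub, eval_sub, eval_X, eval_C, eval_C]
      rw [Matrix.det_fin_two]
      have e00 : (z • (1 : Matrix (Fin (3^0+1)) (Fin (3^0+1)) ℂ) - lapMatrix p 0) 0 0 = z - 1 := by
        rw [Matrix.sub_apply, Matrix.smul_apply, Matrix.one_apply_eq, lapMatrix_apply]
        norm_num
      have e01 : (z • (1 : Matrix (Fin (3^0+1)) (Fin (3^0+1)) ℂ) - lapMatrix p 0) 0 1 = 1 := by
        rw [Matrix.sub_apply, Matrix.smul_apply, Matrix.one_apply_ne (by decide), lapMatrix_apply]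
        norm_num
      have e10 : (z • (1 : Matrix (Fin (3^0+1)) (Fin (3^0+1)) ℂ) - lapMatrix p 0) 1 0 = 1 := by
        rw [Matrix.sub_apply, Matrix.smul_apply, Matrix.one_apply_ne (by decide), lapMatrix_apply]
        norm_num
      have e11 : (z • (1 : Matrix (Fin (3^0+1)) (Fin (3^0+1)) ℂ) - lapMatrix p 0) 1 1 = z - 1 := by
        rw [Matrix.sub_apply, Matrix.smul_apply, Matrix.one_apply_eq, lapMatrix_apply]
        norm_num
      rw [e00, e01, e10, e11]
      push_cast
      ring
    rw [this]
    exact Set.infinite_univ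
open Polynomial

lemma charpoly_key {p : ℝ} (hp : 0 < p ∧ p < 1) {l : ℕ} {F : Finset ℝ}
    (hcard : F.card = 3^l + 1)
    (hcp : (lapMatrix p l).charpoly = (F.val.map (fun r : ℝ => X - C (r:ℂ))).prod) :
    (X - C (((1-p : ℝ)):ℂ)) * (X - C (((1+p : ℝ)):ℂ)) * (lapMatrix p (l+1)).charpoly
      = (F.val.map (fun r : ℝ => PC p - C ((p*(1-p)*r : ℝ):ℂ))).prod := by
  have hc0 : p * (1-p) ≠ 0 := ne_of_gt (mul_pos hp.1 (by linarith [hp.2]))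
  have hcast : ((p*(1-p) : ℝ) : ℂ) = (p:ℂ) * (1 - (p:ℂ)) := by push_cast; ring
  have hcC' : (p:ℂ) * (1 - (p:ℂ)) ≠ 0 := by
    rw [← hcast]
    exact_mod_cast hc0
  apply Polynomial.eq_of_infinite_eval_eq
  apply Set.Infinite.mono (s := ({((1-p:ℝ):ℂ), ((1+p:ℝ):ℂ)} : Set ℂ)ᶜ)
  · intro z hz
    simp only [Set.mem_compl_iff, Set.mem_insert_iff, Set.mem_singleton_iff] at hz
    push_neg at hz
    obtain ⟨hz1, hz2⟩ := hz
    have hΔ : (z-1)^2 - (p:ℂ)^2 ≠ 0 := by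
      have he : (z-1)^2 - (p:ℂ)^2 = (z - ((1-p:ℝ):ℂ)) * (z - ((1+p:ℝ):ℂ)) := by
        push_cast; ring
      rw [he]
      exact mul_ne_zero (sub_ne_zero.2 hz1) (sub_ne_zero.2 hz2)
    have hkey := blocks_det p z l hcC' hΔ
    simp only [Set.mem_setOf_eq]
    rw [eval_mul, eval_mul, eval_sub, eval_sub, eval_X, eval_C, eval_C, _root_.eval_charpoly]
    have e1 : (z - ((1-p:ℝ):ℂ)) * (z - ((1+p:ℝ):ℂ)) = (z-1)^2 - (p:ℂ)^2 := by
      push_cast; ring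
    rw [e1, hkey, ← _root_.eval_charpoly, hcp]
    rw [Polynomial.eval_multiset_prod, Polynomial.eval_multiset_prod,
      Multiset.map_map, Multiset.map_map]
    have hn : Multiset.card F.val = 3^l + 1 := hcard
    rw [show ((p:ℂ)*(1-(p:ℂ)))^(3^l+1) =
        ((F.val.map (fun _ : ℝ => (p:ℂ)*(1-(p:ℂ)))).prod) from by
      rw [Multiset.map_const', Multiset.prod_replicate, hn]]
    rw [← Multiset.prod_map_mul]
    refine congrArg Multiset.prod (Multiset.map_congr rfl ?_)
    intro r hr
    simp only [Function.comp_apply, eval_sub, eval_X, eval_C, PC, eval_mul, eval_add,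
      eval_ofNat, eval_one]
    unfold Rlap
    push_cast
    field_simp [left_ne_zero_of_mul hcC', right_ne_zero_of_mul hcC']
    all_goals ring
  · apply Set.Finite.infinite_compl
    exact Set.Finite.insert _ (Set.finite_singleton _)
open Polynomial

lemma count_triple (a b c t : ℝ) : ({a,b,c} : Multiset ℝ).count t =
    (if t = a then 1 else 0) + (if t = b then 1 else 0) + (if t = c then 1 else 0) := by
  simp only [Multiset.insert_eq_cons, Multiset.count_cons, Multiset.count_singleton]
  split_ifs <;> omega

lemma good_step {p : ℝ} (hp : 0 < p ∧ p < 1) {l : ℕ} {F : Finset ℝ} (hF : GoodF p l F) :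
    ∃ F' : Finset ℝ, GoodF p (l+1) F' ∧ F ⊆ F' := by
  classical
  obtain ⟨hcard, hIcc, h0F, h2F, hhalf, hinv, hcp⟩ := hF
  have hp1 := hp.1
  have hp2 := hp.2
  have hc0 : p * (1-p) ≠ 0 := ne_of_gt (mul_pos hp.1 (by linarith))
  set bigM : Multiset ℝ := F.val.bind (fun r => trip p r) with hbigdef
  have huniq : ∀ t r r', r ∈ F → r' ∈ F → t ∈ trip p r → t ∈ trip p r' → r = r' := by
    intro t r r' hr hr' htr htr'
    have h1 := (trip_mem hp (hIcc (Finset.mem_coe.2 hr)) htr).2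
    have h2 := (trip_mem hp (hIcc (Finset.mem_coe.2 hr')) htr').2
    exact mul_left_cancel₀ hc0 (by rw [← h1, ← h2])
  have hcount : ∀ t r, r ∈ F → t ∈ trip p r → bigM.count t = (trip p r).count t := by
    intro t r hr htr
    rw [hbigdef, Multiset.count_bind]
    have he : (Multiset.map (fun b => (trip p b).count t) F.val).sum
        = ∑ r' ∈ F, (trip p r').count t := rfl
    rw [he, Finset.sum_eq_single r]
    · intro b hb hbne
      rw [Multiset.count_eq_zero]
      intro htb
      exact hbne (huniq t b r hb hr htb htr)
    · intro habs
      exact absurd hr habs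
  have h0big : (0:ℝ) ∈ bigM := Multiset.mem_bind.2 ⟨0, h0F, by rw [trip_zero]; simp⟩
  have h2big : (2:ℝ) ∈ bigM := Multiset.mem_bind.2 ⟨2, h2F, by rw [trip_two]; simp⟩
  have h1pmem : (1+p) ∈ bigM := Multiset.mem_bind.2 ⟨0, h0F, by rw [trip_zero]; simp⟩
  have h1mmem : (1-p) ∈ bigM := Multiset.mem_bind.2 ⟨2, h2F, by rw [trip_two]; simp⟩
  have hne_pm : (1-p : ℝ) ≠ 1+p := by intro h; linarith
  set T : Multiset ℝ := (bigM.erase (1+p)).erase (1-p) with hTdef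
  have hTle : T ≤ bigM := le_trans (Multiset.erase_le _ _) (Multiset.erase_le _ _)
  have hTbig : bigM = (1+p) ::ₘ (1-p) ::ₘ T := by
    have e1 : (1-p) ::ₘ T = bigM.erase (1+p) :=
      Multiset.cons_erase ((Multiset.mem_erase_of_ne hne_pm).2 h1mmem)
    have e2 : (1+p) ::ₘ bigM.erase (1+p) = bigM := Multiset.cons_erase h1pmem
    rw [← e2, ← e1]
  have hcountT_1p : T.count (1+p) = bigM.count (1+p) - 1 := by
    rw [hTdef, Multiset.count_erase_of_ne (Ne.symm hne_pm), Multiset.count_erase_self]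
  have hcountT_1m : T.count (1-p) = bigM.count (1-p) - 1 := by
    rw [hTdef, Multiset.count_erase_self, Multiset.count_erase_of_ne hne_pm]
  have hcountT_other : ∀ t : ℝ, t ≠ 1+p → t ≠ 1-p → T.count t = bigM.count t := by
    intro t h1 h2
    rw [hTdef, Multiset.count_erase_of_ne h2, Multiset.count_erase_of_ne h1]
  have hr1p : ∀ r ∈ F, (1+p) ∈ trip p r → r = 0 := by
    intro r hr htr
    have h1 := (trip_mem hp (hIcc (Finset.mem_coe.2 hr)) htr).2
    rw [Preal_one_add] at h1
    exact (mul_eq_zero.1 h1.symm).resolve_left hc0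
  have hr1m : ∀ r ∈ F, (1-p) ∈ trip p r → r = 2 := by
    intro r hr htr
    have h1 := (trip_mem hp (hIcc (Finset.mem_coe.2 hr)) htr).2
    rw [Preal_one_sub] at h1
    have h2 : (p*(1-p)) * 2 = (p*(1-p)) * r := by linarith
    exact (mul_left_cancel₀ hc0 h2).symm
  -- count bounds
  have hcountT : ∀ t : ℝ, T.count t ≤ 1 := by
    intro t
    by_cases ht1p : t = 1+p
    · subst ht1p
      rw [hcountT_1p, hcount (1+p) 0 h0F (by rw [trip_zero]; simp), trip_zero, count_triple]
      rw [if_neg (by intro h; linarith), if_pos rfl]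
      split_ifs <;> omega
    · by_cases ht1m : t = 1-p
      · subst ht1m
        rw [hcountT_1m, hcount (1-p) 2 h2F (by rw [trip_two]; simp), trip_two, count_triple]
        rw [if_neg (by intro h; linarith), if_pos rfl]
        split_ifs <;> omega
      · rw [hcountT_other t ht1p ht1m]
        by_cases htb : t ∈ bigM
        · obtain ⟨r, hrF, htr⟩ := Multiset.mem_bind.1 htb
          rw [hcount t r hrF htr]
          have hrIcc := hIcc (Finset.mem_coe.2 hrF)
          by_cases hr0 : r = 0
          · subst hr0
            rw [trip_zero, count_triple, if_neg ht1p]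
            split_ifs with e1 e2
            · exfalso; rw [e1] at e2; linarith
            · omega
            · omega
            · omega
          · by_cases hr2 : r = 2
            · subst hr2
              rw [trip_two, count_triple, if_neg ht1m]
              split_ifs with e1 e2
              · exfalso; rw [e1] at e2; linarith
              · omega
              · omega
              · omega
            · have hmid : 0 < r ∧ r < 2 :=
                ⟨lt_of_le_of_ne hrIcc.1 (Ne.symm hr0), lt_of_le_of_ne hrIcc.2 hr2⟩
              exact Multiset.nodup_iff_count_le_one.1 (trip_mid_props hp hmid).1 t
        · have h0 : bigM.count t = 0 := Multiset.count_eq_zero.2 htb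
          have := Multiset.count_le_of_le t hTle
          omega
  have hTnodup : T.Nodup := Multiset.nodup_iff_count_le_one.2 hcountT
  -- cards
  have hbigcard : Multiset.card bigM = 3 * F.card := by
    rw [hbigdef, Multiset.card_bind]
    have he : Multiset.map (fun r => Multiset.card (trip p r)) F.val
        = Multiset.map (fun _ : ℝ => 3) F.val :=
      Multiset.map_congr rfl (fun r _ => trip_card p r)
    simp only [Function.comp]
    rw [he, Multiset.map_const', Multiset.sum_replicate, smul_eq_mul]
    exact mul_comm _ _
  have hTcard : Multiset.card T = 3^(l+1) + 1 := by
    have e1 : Multiset.card (bigM.erase (1+p)) = Multiset.card bigM - 1 :=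
      Multiset.card_erase_of_mem h1pmem
    have e2 : Multiset.card T = Multiset.card (bigM.erase (1+p)) - 1 :=
      Multiset.card_erase_of_mem ((Multiset.mem_erase_of_ne hne_pm).2 h1mmem)
    have hP : 3^(l+1) = 3*3^l := by rw [pow_succ]; ring
    omega
  -- F ⊆ T
  have hFsub : ∀ t ∈ F, t ∈ T := by
    intro t htF
    obtain ⟨r, hrF, hPr⟩ := hinv t htF
    have hrIcc := hIcc (Finset.mem_coe.2 hrF)
    have htrip : t ∈ trip p r := by
      have h0 : (((trip p r).map (fun s : ℝ => X - C ((s:ℝ):ℂ))).prod).eval ((t:ℝ):ℂ) = 0 := by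
        rw [← trip_factor hp hrIcc, eval_sub, eval_C, PC_eval, hPr, sub_self]
      rw [Polynomial.eval_multiset_prod, Multiset.map_map, Multiset.prod_eq_zero_iff,
        Multiset.mem_map] at h0
      obtain ⟨s, hs, hsx⟩ := h0
      simp only [Function.comp_apply, eval_sub, eval_X, eval_C] at hsx
      have hts : t = s := by exact_mod_cast sub_eq_zero.1 hsx
      rw [hts]
      exact hs
    have htbig : t ∈ bigM := Multiset.mem_bind.2 ⟨r, hrF, htrip⟩
    by_cases ht1p : t = 1+p
    · by_cases hph : p = 1/2
      · have hr0 : r = 0 := hr1p r hrF (ht1p ▸ htrip)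
        have hcnt : bigM.count t = 2 := by
          rw [hcount t 0 h0F (hr0 ▸ htrip), trip_zero, count_triple]
          rw [ht1p]
          subst hph
          norm_num
        have hpos : 0 < T.count t := by
          have := hcountT_1p
          rw [← ht1p] at this
          omega
        exact Multiset.count_pos.1 hpos
      · exact absurd (ht1p ▸ htF) ((hhalf hph).2)
    · by_cases ht1m : t = 1-p
      · by_cases hph : p = 1/2
        · have hr2 : r = 2 := hr1m r hrF (ht1m ▸ htrip)
          have hcnt : bigM.count t = 2 := by
            rw [hcount t 2 h2F (hr2 ▸ htrip), trip_two, count_triple]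
            rw [ht1m]
            subst hph
            norm_num
          have hpos : 0 < T.count t := by
            have := hcountT_1m
            rw [← ht1m] at this
            omega
          exact Multiset.count_pos.1 hpos
        · exact absurd (ht1m ▸ htF) ((hhalf hph).1)
      · rw [hTdef]
        exact (Multiset.mem_erase_of_ne ht1m).2 ((Multiset.mem_erase_of_ne ht1p).2 htbig)
  -- assemble
  refine ⟨⟨T, hTnodup⟩, ⟨?_, ?_, ?_, ?_, ?_, ?_, ?_⟩, ?_⟩
  · -- card
    show Multiset.card T = 3^(l+1) + 1
    exact hTcard
  · -- Icc
    intro x hx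
    have hxT : x ∈ T := by exact_mod_cast hx
    have hxb : x ∈ bigM := Multiset.mem_of_le hTle hxT
    obtain ⟨r, hrF, htr⟩ := Multiset.mem_bind.1 hxb
    have := (trip_mem hp (hIcc (Finset.mem_coe.2 hrF)) htr).1
    exact Set.mem_Icc.2 this
  · -- 0 ∈
    show (0:ℝ) ∈ T
    rw [hTdef]
    exact (Multiset.mem_erase_of_ne (by intro h; linarith)).2
      ((Multiset.mem_erase_of_ne (by intro h; linarith)).2 h0big)
  · -- 2 ∈
    show (2:ℝ) ∈ T
    rw [hTdef]
    exact (Multiset.mem_erase_of_ne (by intro h; linarith)).2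
      ((Multiset.mem_erase_of_ne (by intro h; linarith)).2 h2big)
  · -- p ≠ 1/2
    intro hph
    constructor
    · intro habs
      have hmem : (1-p) ∈ T := habs
      have h1 : 1 ≤ T.count (1-p) := Multiset.one_le_count_iff_mem.2 hmem
      have h2 : bigM.count (1-p) = 1 := by
        rw [hcount (1-p) 2 h2F (by rw [trip_two]; simp), trip_two, count_triple]
        rw [if_neg (by intro h; linarith), if_neg (by intro h; apply hph; linarith), if_pos rfl]
      omega
    · intro habs
      have hmem : (1+p) ∈ T := habs
      have h1 : 1 ≤ T.count (1+p) := Multiset.one_le_count_iff_mem.2 hmem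
      have h2 : bigM.count (1+p) = 1 := by
        rw [hcount (1+p) 0 h0F (by rw [trip_zero]; simp), trip_zero, count_triple]
        rw [if_neg (by intro h; linarith), if_neg (by intro h; apply hph; linarith), if_pos rfl]
      omega
  · -- invariance
    intro t ht
    have htT : t ∈ T := ht
    have htb : t ∈ bigM := Multiset.mem_of_le hTle htT
    obtain ⟨r, hrF, htr⟩ := Multiset.mem_bind.1 htb
    exact ⟨r, hFsub r hrF, (trip_mem hp (hIcc (Finset.mem_coe.2 hrF)) htr).2⟩
  · -- charpoly
    show (lapMatrix p (l+1)).charpoly = (T.map (fun r : ℝ => X - C ((r:ℝ):ℂ))).prod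
    have hA := charpoly_key hp hcard hcp
    have hBig : (F.val.map (fun r : ℝ => PC p - C ((p*(1-p)*r:ℝ):ℂ))).prod
        = (bigM.map (fun t : ℝ => X - C ((t:ℝ):ℂ))).prod := by
      rw [hbigdef, Multiset.map_bind, Multiset.prod_bind]
      exact congrArg Multiset.prod (Multiset.map_congr rfl
        (fun r hr => trip_factor hp (hIcc (Finset.mem_coe.2 hr))))
    have hDT : (bigM.map (fun t : ℝ => X - C ((t:ℝ):ℂ))).prod
        = (X - C ((1+p:ℝ):ℂ)) * ((X - C ((1-p:ℝ):ℂ)) *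
            (T.map (fun t : ℝ => X - C ((t:ℝ):ℂ))).prod) := by
      rw [hTbig]
      simp [Multiset.map_cons, Multiset.prod_cons]
    have hDne : (X - C (((1-p):ℝ):ℂ)) * (X - C (((1+p):ℝ):ℂ)) ≠ 0 :=
      mul_ne_zero (Polynomial.X_sub_C_ne_zero _) (Polynomial.X_sub_C_ne_zero _)
    apply mul_left_cancel₀ hDne
    rw [hA, hBig, hDT]
    ring
  · -- subset
    intro t ht
    exact hFsub t ht

lemma good_exists {p : ℝ} (hp : 0 < p ∧ p < 1) (l : ℕ) : ∃ F, GoodF p l F := by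
  induction l with
  | zero => exact ⟨_, good_zero hp⟩
  | succ n ih =>
    obtain ⟨F, hF⟩ := ih
    obtain ⟨F', hF', -⟩ := good_step hp hF
    exact ⟨F', hF'⟩

lemma matSpec_lapMatrix {p : ℝ} {l : ℕ} {F : Finset ℝ} (hF : GoodF p l F) :
    matSpec (lapMatrix p l) = (fun r : ℝ => (r:ℂ)) '' ↑F := by
  ext z
  simp only [matSpec, Set.mem_setOf_eq]
  have h1 : (∃ v : Fin (3^l+1) → ℂ, v ≠ 0 ∧ (lapMatrix p l).mulVec v = z • v) ↔
      ((lapMatrix p l) - z • 1).det = 0 := by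
    rw [← Matrix.exists_mulVec_eq_zero_iff]
    constructor
    · rintro ⟨v, hv, hveq⟩
      exact ⟨v, hv, by
        rw [Matrix.sub_mulVec, hveq, Matrix.smul_mulVec, Matrix.one_mulVec, sub_self]⟩
    · rintro ⟨v, hv, hveq⟩
      refine ⟨v, hv, ?_⟩
      rw [Matrix.sub_mulVec, Matrix.smul_mulVec, Matrix.one_mulVec, sub_eq_zero] at hveq
      exact hveq
  rw [h1]
  have h2 : ((lapMatrix p l) - z • 1).det = 0 ↔
      (z • (1 : Matrix (Fin (3^l+1)) (Fin (3^l+1)) ℂ) - lapMatrix p l).det = 0 := by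
    rw [show (z • (1 : Matrix (Fin (3^l+1)) (Fin (3^l+1)) ℂ) - lapMatrix p l)
        = -(lapMatrix p l - z • 1) from (neg_sub _ _).symm, Matrix.det_neg]
    have hne : ((-1:ℂ))^(Fintype.card (Fin (3^l+1))) ≠ 0 := pow_ne_zero _ (by norm_num)
    constructor
    · intro h
      rw [h, mul_zero]
    · intro h
      exact (mul_eq_zero.1 h).resolve_left hne
  rw [h2, ← _root_.eval_charpoly, hF.2.2.2.2.2.2]
  rw [Polynomial.eval_multiset_prod, Multiset.map_map, Multiset.prod_eq_zero_iff,
    Multiset.mem_map]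
  simp only [Function.comp_apply, eval_sub, eval_X, eval_C, Set.mem_image, Finset.mem_coe]
  constructor
  · rintro ⟨r, hr, hr0⟩
    exact ⟨r, hr, (sub_eq_zero.1 hr0).symm⟩
  · rintro ⟨r, hrF, hrz⟩
    exact ⟨r, hrF, by rw [← hrz, sub_self]⟩


/-- The eigenvalues of `Δ^(l)_p` are real, lie in `[0,2]`, there are exactly `3^l + 1`
distinct ones (so all eigenvalues are simple), and the spectra are nested in `l`. -/
theorem lapMatrix_eigenvalues_real_simple_nested (p : ℝ) (hp : p ∈ Set.Ioo (0 : ℝ) 1)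
    (l : ℕ) :
    (∀ z ∈ matSpec (lapMatrix p l), ∃ x : ℝ, z = (x : ℂ) ∧ x ∈ Set.Icc (0 : ℝ) 2) ∧
    (matSpec (lapMatrix p l)).ncard = 3 ^ l + 1 ∧
    matSpec (lapMatrix p l) ⊆ matSpec (lapMatrix p (l + 1)) := by
  have hp' : 0 < p ∧ p < 1 := ⟨hp.1, hp.2⟩
  obtain ⟨F, hF⟩ := good_exists hp' l
  obtain ⟨F', hF', hsub⟩ := good_step hp' hF
  have hm : matSpec (lapMatrix p l) = (fun r : ℝ => (r:ℂ)) '' ↑F := matSpec_lapMatrix hF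
  have hm' : matSpec (lapMatrix p (l+1)) = (fun r : ℝ => (r:ℂ)) '' ↑F' := matSpec_lapMatrix hF'
  refine ⟨?_, ?_, ?_⟩
  · intro z hz
    rw [hm] at hz
    obtain ⟨r, hrF, hrz⟩ := hz
    exact ⟨r, hrz.symm, hF.2.1 hrF⟩
  · rw [hm]
    rw [show (fun r : ℝ => (r:ℂ)) '' ↑F = ↑(F.image (fun r : ℝ => (r:ℂ))) from
      (Finset.coe_image).symm]
    rw [Set.ncard_coe_finset,
      Finset.card_image_of_injective _ (fun a b h => by exact_mod_cast h), hF.1]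
  · rw [hm, hm']
    exact Set.image_mono (Finset.coe_subset.2 hsub)
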